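/- Fix β ≥ 0 and h ∈ ℝ, and let σ be drawn from the Curie-Weiss Gibbs measure on {-1,1}^n given by P({σ}) = Z^{-1} exp((β/n) Σ_{i<j} σ_i σ_j + β h Σ_i σ_i). Let m := (1/n) Σ_{i=1}^n σ_i and for each i let m_i := (1/n) Σ_{j ≠ i} σ_j. Then for every t ≥ 0, P(|m - (1/n) Σ_{i=1}^n tanh(β m_i + β h)| ≥ t/√n) ≤ 2 exp(-t² / (4(1 + β))). -/

import Mathlib

/-!
Chatterjee's method of exchangeable pairs. Let `s'` arise from a Gibbs sample `s` by one
heat-bath step of Glauber dynamics at a uniformly random site `i`. The pair `(s, s')` is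
exchangeable, and since the conditional mean of the resampled spin is `tanh (β mᵢ + β h)`, the
antisymmetric statistic `F = σᵢ - σ'ᵢ` satisfies `E[F | s] = f s` with
`f = m - (1/n) ∑ tanh (β mᵢ + β h)`. Changing one spin moves `f` by at most `(1 + β)/n · |F|`
(`tanh` is 1-Lipschitz), so antisymmetry yields `|E[f e^{λf}]| ≤ 2(1 + β)/n · |λ| E[e^{λf}]`.
Integrating this differential inequality gives `E[e^{λf}] ≤ exp ((1 + β) λ² / n)`, and the
Chernoff bound at `λ = t √n / (2(1 + β))` gives the tail estimate.
-/

open Finset Real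

namespace Real

theorem exp_sub_exp_eq_mul_tanh (a b : ℝ) :
    exp a - exp b = (exp a + exp b) * tanh ((a - b) / 2) := by
  have hc := (cosh_pos ((a - b) / 2)).ne'
  have ha : exp a = exp ((a + b) / 2) * exp ((a - b) / 2) := by rw [← exp_add]; ring_nf
  have hb : exp b = exp ((a + b) / 2) * exp (-((a - b) / 2)) := by rw [← exp_add]; ring_nf
  rw [tanh_eq_sinh_div_cosh, sinh_eq, cosh_eq] at *
  rw [ha, hb]
  field_simp

theorem hasDerivAt_tanh (x : ℝ) : HasDerivAt tanh (1 / cosh x ^ 2) x := by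
  have h := (hasDerivAt_sinh x).fun_div (hasDerivAt_cosh x) (cosh_pos x).ne'
  rw [show tanh = fun y => sinh y / cosh y from funext tanh_eq_sinh_div_cosh]
  refine h.congr_deriv ?_
  rw [← cosh_sq_sub_sinh_sq x]
  ring

theorem lipschitzWith_tanh : LipschitzWith 1 tanh :=
  lipschitzWith_of_nnnorm_deriv_le (fun x => (hasDerivAt_tanh x).differentiableAt) fun x => by
    have hc := cosh_pos x
    rw [(hasDerivAt_tanh x).deriv, ← NNReal.coe_le_coe, coe_nnnorm, norm_eq_abs, NNReal.coe_one,
      abs_of_pos (by positivity), div_le_one (by positivity)]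
    nlinarith [one_le_cosh x]

theorem abs_tanh_sub_tanh_le (a b : ℝ) : |tanh a - tanh b| ≤ |a - b| := by
  simpa [dist_eq] using lipschitzWith_tanh.dist_le_mul a b

theorem abs_exp_sub_exp_le (a b : ℝ) :
    |exp a - exp b| ≤ |a - b| / 2 * (exp a + exp b) := by
  have htanh : |tanh ((a - b) / 2)| ≤ |a - b| / 2 := by
    simpa [abs_div] using abs_tanh_sub_tanh_le ((a - b) / 2) 0
  rw [exp_sub_exp_eq_mul_tanh, abs_mul, abs_of_pos (by positivity), mul_comm]
  gcongr

end Real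

theorem le_mul_exp_of_abs_deriv_le {φ φ' : ℝ → ℝ} {c : ℝ} (hφ : ∀ l, HasDerivAt φ (φ' l) l)
    (hbound : ∀ l, |φ' l| ≤ c * |l| * φ l) (l : ℝ) : φ l ≤ φ 0 * exp (c * l ^ 2 / 2) := by
  set ψ : ℝ → ℝ := fun l => φ l * exp (-(c * l ^ 2 / 2))
  have hψ : ∀ l, HasDerivAt ψ ((φ' l - c * l * φ l) * exp (-(c * l ^ 2 / 2))) l := fun l =>
    ((hφ l).fun_mul ((((hasDerivAt_pow 2 l).const_mul c).div_const 2).fun_neg.exp)).congr_deriv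
      (by ring)
  have hψc : Continuous ψ := continuous_iff_continuousAt.2 fun l => (hψ l).continuousAt
  have hψl : ψ l ≤ ψ 0 := by
    rcases le_total 0 l with hl | hl
    · refine antitoneOn_of_deriv_nonpos (convex_Ici 0) hψc.continuousOn
        (fun y _ => (hψ y).differentiableAt.differentiableWithinAt) (fun y hy => ?_)
        Set.self_mem_Ici hl hl
      rw [interior_Ici] at hy
      have := (abs_le.1 (hbound y)).2
      rw [abs_of_pos hy] at this
      rw [(hψ y).deriv]
      exact mul_nonpos_of_nonpos_of_nonneg (by linarith) (exp_pos _).le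
    · refine monotoneOn_of_deriv_nonneg (convex_Iic 0) hψc.continuousOn
        (fun y _ => (hψ y).differentiableAt.differentiableWithinAt) (fun y hy => ?_)
        hl Set.self_mem_Iic hl
      rw [interior_Iic] at hy
      have := (abs_le.1 (hbound y)).1
      rw [abs_of_neg hy] at this
      rw [(hψ y).deriv]
      exact mul_nonneg (by linarith) (exp_pos _).le
  have hψ0 : ψ 0 = φ 0 := by simp [ψ]
  calc φ l = ψ l * exp (c * l ^ 2 / 2) := by simp [ψ, mul_assoc, ← exp_add]
    _ ≤ φ 0 * exp (c * l ^ 2 / 2) := by rw [← hψ0]; gcongr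

section FiniteSubgaussian

variable {Ω : Type*} [Fintype Ω] {w f : Ω → ℝ}

theorem hasDerivAt_sum_mul_exp_mul (l : ℝ) :
    HasDerivAt (fun l => ∑ s, w s * exp (l * f s)) (∑ s, w s * (f s * exp (l * f s))) l :=
  HasDerivAt.fun_sum fun s _ => by
    simpa [mul_comm] using (((hasDerivAt_id l).mul_const (f s)).exp).const_mul (w s)

theorem sum_mul_exp_mul_le_of_abs_deriv_le {c : ℝ}
    (hbound : ∀ l, |∑ s, w s * (f s * exp (l * f s))| ≤ c * |l| * ∑ s, w s * exp (l * f s))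
    (l : ℝ) : ∑ s, w s * exp (l * f s) ≤ (∑ s, w s) * exp (c * l ^ 2 / 2) := by
  simpa using le_mul_exp_of_abs_deriv_le hasDerivAt_sum_mul_exp_mul hbound l

theorem sum_filter_le_abs_le_two_mul_exp {c x : ℝ} (hw : ∀ s, 0 ≤ w s) (hc : 0 < c)
    (hx : 0 ≤ x) (hmgf : ∀ l, ∑ s, w s * exp (l * f s) ≤ (∑ s, w s) * exp (c * l ^ 2 / 2)) :
    ∑ s ∈ univ.filter (fun s => x ≤ |f s|), w s ≤ 2 * exp (-x ^ 2 / (2 * c)) * ∑ s, w s := by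
  set l := x / c
  have hl : 0 ≤ l := div_nonneg hx hc.le
  have hexp : -(l * x) + c * l ^ 2 / 2 = -x ^ 2 / (2 * c) := by
    simp only [l]; field_simp; ring
  -- Markov's inequality for `exp (l * f)` and `exp (-l * f)` at once
  have hmarkov : ∀ s, x ≤ |f s| → 1 ≤ exp (l * f s - l * x) + exp (-l * f s - l * x) := by
    intro s hs
    rcases le_abs'.1 hs with hs | hs
    · have : 1 ≤ exp (-l * f s - l * x) := one_le_exp (by nlinarith)
      linarith [exp_pos (l * f s - l * x)]
    · have : 1 ≤ exp (l * f s - l * x) := one_le_exp (by nlinarith)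
      linarith [exp_pos (-l * f s - l * x)]
  calc ∑ s ∈ univ.filter (fun s => x ≤ |f s|), w s
      ≤ ∑ s ∈ univ.filter (fun s => x ≤ |f s|),
          w s * (exp (l * f s - l * x) + exp (-l * f s - l * x)) :=
        sum_le_sum fun s hs => le_mul_of_one_le_right (hw s) (hmarkov s (mem_filter.1 hs).2)
    _ ≤ ∑ s, w s * (exp (l * f s - l * x) + exp (-l * f s - l * x)) :=
        sum_le_sum_of_subset_of_nonneg (filter_subset _ _) fun s _ _ => by
          have := hw s; positivity
    _ = exp (-(l * x)) * (∑ s, w s * exp (l * f s) + ∑ s, w s * exp (-l * f s)) := by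
        simp only [sub_eq_add_neg _ (l * x), exp_add, mul_add, sum_add_distrib, mul_sum]
        congr 1 <;> exact sum_congr rfl fun s _ => by ring
    _ ≤ exp (-(l * x)) * ((∑ s, w s) * exp (c * l ^ 2 / 2)
          + (∑ s, w s) * exp (c * (-l) ^ 2 / 2)) := by
        gcongr
        · exact hmgf l
        · exact hmgf (-l)
    _ = 2 * exp (-x ^ 2 / (2 * c)) * ∑ s, w s := by
        rw [neg_sq, ← hexp, exp_add]; ring

end FiniteSubgaussian

section ExchangeablePair

variable {γ : Type*} [Fintype γ] (J : γ ≃ γ) {μ F : γ → ℝ}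

theorem two_mul_sum_mul_antisymm_eq (hμ : ∀ x, μ (J x) = μ x) (hF : ∀ x, F (J x) = -F x)
    (G : γ → ℝ) : 2 * ∑ x, μ x * F x * G x = ∑ x, μ x * F x * (G x - G (J x)) := by
  have h := J.sum_comp fun x => μ x * F x * G x
  simp only [hμ, hF] at h
  rw [two_mul]
  nth_rewrite 2 [← h]
  rw [← sum_add_distrib]
  exact sum_congr rfl fun x _ => by ring

theorem abs_sum_mul_exp_le_of_antisymm {g : γ → ℝ} {C : ℝ} (hμ0 : ∀ x, 0 ≤ μ x)
    (hμ : ∀ x, μ (J x) = μ x) (hF : ∀ x, F (J x) = -F x)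
    (hC : ∀ x, |F x * (g x - g (J x))| ≤ C) (l : ℝ) :
    |∑ x, μ x * F x * exp (l * g x)| ≤ C / 2 * |l| * ∑ x, μ x * exp (l * g x) := by
  have hswap : ∑ x, μ x * exp (l * g (J x)) = ∑ x, μ x * exp (l * g x) := by
    simpa only [hμ] using J.sum_comp fun x => μ x * exp (l * g x)
  have hterm : ∀ x, |μ x * F x * (exp (l * g x) - exp (l * g (J x)))|
      ≤ C * |l| / 2 * (μ x * exp (l * g x) + μ x * exp (l * g (J x))) := fun x => by
    have hexp := abs_exp_sub_exp_le (l * g x) (l * g (J x))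
    rw [← mul_sub, abs_mul] at hexp
    rw [abs_mul, abs_mul, abs_of_nonneg (hμ0 x)]
    calc μ x * |F x| * |exp (l * g x) - exp (l * g (J x))|
        ≤ μ x * |F x| * (|l| * |g x - g (J x)| / 2 * (exp (l * g x) + exp (l * g (J x)))) :=
          mul_le_mul_of_nonneg_left hexp (mul_nonneg (hμ0 x) (abs_nonneg _))
      _ = |l| / 2 * |F x * (g x - g (J x))| * (μ x * (exp (l * g x) + exp (l * g (J x)))) := by
          rw [abs_mul]; ring
      _ ≤ |l| / 2 * C * (μ x * (exp (l * g x) + exp (l * g (J x)))) := by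
          gcongr
          · exact mul_nonneg (hμ0 x) (by positivity)
          · exact hC x
      _ = _ := by ring
  have h2 := two_mul_sum_mul_antisymm_eq J hμ hF fun x => exp (l * g x)
  have : 2 * |∑ x, μ x * F x * exp (l * g x)| ≤ C * |l| * ∑ x, μ x * exp (l * g x) :=
    calc 2 * |∑ x, μ x * F x * exp (l * g x)|
        = |∑ x, μ x * F x * (exp (l * g x) - exp (l * g (J x)))| := by
          rw [← h2, abs_mul, abs_two]
      _ ≤ ∑ x, C * |l| / 2 * (μ x * exp (l * g x) + μ x * exp (l * g (J x))) :=
          (abs_sum_le_sum_abs _ _).trans (sum_le_sum fun x _ => hterm x)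
      _ = C * |l| * ∑ x, μ x * exp (l * g x) := by
          rw [← mul_sum, sum_add_distrib, hswap]; ring
  linarith

end ExchangeablePair

theorem Finset.two_mul_sum_filter_lt_mul {ι R : Type*} [LinearOrder ι] [Fintype ι] [CommRing R]
    (x : ι → R) :
    2 * ∑ p ∈ univ.filter (fun p : ι × ι => p.1 < p.2), x p.1 * x p.2
      = (∑ i, x i) ^ 2 - ∑ i, x i ^ 2 := by
  have hsplit : ∀ p : ι × ι, x p.1 * x p.2 = (if p.1 < p.2 then x p.1 * x p.2 else 0)
      + (if p.2 < p.1 then x p.2 * x p.1 else 0) + (if p.1 = p.2 then x p.1 ^ 2 else 0) := by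
    rintro ⟨i, j⟩
    rcases lt_trichotomy i j with hij | rfl | hij
    · simp [hij, hij.not_gt, hij.ne]
    · simp [sq]
    · simp [hij, hij.not_gt, hij.ne', mul_comm]
  have hsq : (∑ i, x i) ^ 2 = ∑ p : ι × ι, ((if p.1 < p.2 then x p.1 * x p.2 else 0)
      + (if p.2 < p.1 then x p.2 * x p.1 else 0) + (if p.1 = p.2 then x p.1 ^ 2 else 0)) := by
    rw [sq, sum_mul_sum, ← Fintype.sum_prod_type']
    exact Fintype.sum_congr _ _ hsplit
  have hswap : ∑ p : ι × ι, (if p.2 < p.1 then x p.2 * x p.1 else 0)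
      = ∑ p : ι × ι, (if p.1 < p.2 then x p.1 * x p.2 else 0) :=
    (Equiv.prodComm ι ι).sum_comp fun p => if p.1 < p.2 then x p.1 * x p.2 else 0
  have hdiag : ∑ p : ι × ι, (if p.1 = p.2 then x p.1 ^ 2 else 0) = ∑ i, x i ^ 2 := by
    simp [Fintype.sum_prod_type]
  rw [hsq, sum_add_distrib, sum_add_distrib, hswap, hdiag, sum_filter]
  ring

namespace SpinSystem

open Function

def spin (b : Bool) : ℝ := if b then 1 else -1

@[simp] theorem spin_true : spin true = 1 := rfl

@[simp] theorem spin_false : spin false = -1 := rfl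

theorem spin_sq (b : Bool) : spin b ^ 2 = 1 := by
  cases b <;> norm_num

theorem abs_spin_sub_spin_le (a b : Bool) : |spin a - spin b| ≤ 2 := by
  cases a <;> cases b <;> norm_num

variable {ι : Type*} [DecidableEq ι]

theorem sum_spin_sub_spin_update (T : Finset ι) (s : ι → Bool) (i : ι) (b : Bool) :
    ∑ j ∈ T, (spin (s j) - spin (update s i b j))
      = if i ∈ T then spin (s i) - spin b else 0 := by
  have : ∀ j, spin (s j) - spin (update s i b j) = if i = j then spin (s i) - spin b else 0 := by
    intro j
    rcases eq_or_ne i j with rfl | hij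
    · simp
    · simp [hij, update_of_ne hij.symm]
  rw [sum_congr rfl fun j _ => this j, sum_ite_eq]

theorem sum_spin_update [Fintype ι] (s : ι → Bool) (i : ι) (b : Bool) :
    ∑ j, spin (update s i b j) = spin b + ∑ j ∈ univ.filter (fun j => j ≠ i), spin (s j) := by
  rw [← add_sum_erase _ _ (mem_univ i), update_self, filter_ne']
  congr 1
  exact sum_congr rfl fun j hj => by rw [update_of_ne (ne_of_mem_erase hj)]

noncomputable def heatBath (w : (ι → Bool) → ℝ) (s : ι → Bool) (i : ι) (b : Bool) : ℝ :=
  w (update s i b) / (w (update s i true) + w (update s i false))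

/-- Reversal of the Glauber transition `(s, i, b)`, which resets spin `i` of `s` to `b`. -/
def glauberSwap : Equiv.Perm ((ι → Bool) × ι × Bool) :=
  Involutive.toPerm (fun x => (update x.1 x.2.1 x.2.2, x.2.1, x.1 x.2.1)) fun x => by simp

@[simp] theorem glauberSwap_apply (x : (ι → Bool) × ι × Bool) :
    glauberSwap x = (update x.1 x.2.1 x.2.2, x.2.1, x.1 x.2.1) := rfl

variable (w : (ι → Bool) → ℝ)

theorem heatBath_detailed_balance (s : ι → Bool) (i : ι) (b : Bool) :
    w (update s i b) * heatBath w (update s i b) i (s i) = w s * heatBath w s i b := by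
  simp only [heatBath, update_idem, update_eq_self]
  ring

theorem heatBath_true_add_false (hw : ∀ s, 0 < w s) (s : ι → Bool) (i : ι) :
    heatBath w s i true + heatBath w s i false = 1 := by
  rw [heatBath, heatBath, ← add_div, div_self (add_pos (hw _) (hw _)).ne']

theorem sum_heatBath_mul_spin_sub (hw : ∀ s, 0 < w s) (s : ι → Bool) (i : ι) :
    ∑ b, heatBath w s i b * (spin (s i) - spin b)
      = spin (s i) - (heatBath w s i true - heatBath w s i false) := by
  have := heatBath_true_add_false w hw s i
  rw [Fintype.sum_bool, spin_true, spin_false]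
  linear_combination spin (s i) * this

theorem heatBath_exp_true_sub_false (H : (ι → Bool) → ℝ) (s : ι → Bool) (i : ι) :
    heatBath (fun s => exp (H s)) s i true - heatBath (fun s => exp (H s)) s i false
      = tanh ((H (update s i true) - H (update s i false)) / 2) := by
  rw [heatBath, heatBath, div_sub_div_same, div_eq_iff (by positivity), exp_sub_exp_eq_mul_tanh,
    mul_comm]

variable [Fintype ι]

theorem sum_heatBath_mul_fst (hw : ∀ s, 0 < w s) (G : (ι → Bool) → ℝ) :
    ∑ x : (ι → Bool) × ι × Bool, w x.1 * heatBath w x.1 x.2.1 x.2.2 * G x.1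
      = Fintype.card ι * ∑ s, w s * G s := by
  simp only [Fintype.sum_prod_type, Fintype.sum_bool, mul_sum]
  refine sum_congr rfl fun s _ => ?_
  simp only [← add_mul, ← mul_add, heatBath_true_add_false w hw, mul_one, sum_const, card_univ,
    nsmul_eq_mul]

theorem sum_heatBath_mul_spin_sub_mul_fst (hw : ∀ s, 0 < w s) (G : (ι → Bool) → ℝ) :
    ∑ x : (ι → Bool) × ι × Bool,
        w x.1 * heatBath w x.1 x.2.1 x.2.2 * (spin (x.1 x.2.1) - spin x.2.2) * G x.1
      = ∑ s, w s * G s * ∑ i, (spin (s i) - (heatBath w s i true - heatBath w s i false)) := by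
  simp only [Fintype.sum_prod_type, ← sum_heatBath_mul_spin_sub w hw, mul_sum]
  exact sum_congr rfl fun s _ => sum_congr rfl fun i _ => sum_congr rfl fun b _ => by ring

end SpinSystem

namespace CurieWeiss

open SpinSystem Function

variable {n : ℕ}

noncomputable def magnetization (s : Fin n → Bool) : ℝ :=
  (1 / n) * ∑ i, spin (s i)

noncomputable def localMagnetization (s : Fin n → Bool) (i : Fin n) : ℝ :=
  (1 / n) * ∑ j ∈ univ.filter (fun j => j ≠ i), spin (s j)

noncomputable def hamiltonian (β h : ℝ) (s : Fin n → Bool) : ℝ :=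
  β / n * (∑ p ∈ univ.filter (fun p : Fin n × Fin n => p.1 < p.2), spin (s p.1) * spin (s p.2))
    + β * h * ∑ i, spin (s i)

noncomputable def meanFieldDeviation (β h : ℝ) (s : Fin n → Bool) : ℝ :=
  magnetization s - (1 / n) * ∑ i, tanh (β * localMagnetization s i + β * h)

variable {β : ℝ} (h : ℝ)

theorem hamiltonian_update_true_sub_false (s : Fin n → Bool) (i : Fin n) :
    hamiltonian β h (update s i true) - hamiltonian β h (update s i false)
      = 2 * (β * localMagnetization s i + β * h) := by
  have ht := two_mul_sum_filter_lt_mul fun j => spin (update s i true j)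
  have hf := two_mul_sum_filter_lt_mul fun j => spin (update s i false j)
  simp only [spin_sq, sum_const, card_univ, Fintype.card_fin, nsmul_one, sum_spin_update,
    spin_true, spin_false] at ht hf
  simp only [hamiltonian, localMagnetization, sum_spin_update, spin_true, spin_false]
  linear_combination β / n / 2 * (ht - hf)

theorem heatBath_sub_eq_tanh (s : Fin n → Bool) (i : Fin n) :
    heatBath (fun s => exp (hamiltonian β h s)) s i true
        - heatBath (fun s => exp (hamiltonian β h s)) s i false
      = tanh (β * localMagnetization s i + β * h) := by
  rw [heatBath_exp_true_sub_false, hamiltonian_update_true_sub_false,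
    mul_div_cancel_left₀ _ two_ne_zero]

theorem sum_spin_sub_heatBath (hn : n ≠ 0) (s : Fin n → Bool) :
    ∑ i, (spin (s i) - (heatBath (fun s => exp (hamiltonian β h s)) s i true
        - heatBath (fun s => exp (hamiltonian β h s)) s i false))
      = n * meanFieldDeviation β h s := by
  simp only [heatBath_sub_eq_tanh, sum_sub_distrib, meanFieldDeviation, magnetization]
  field_simp

theorem abs_meanFieldDeviation_sub_update_le (hβ : 0 ≤ β) (s : Fin n → Bool)
    (i : Fin n) (b : Bool) :
    |meanFieldDeviation β h s - meanFieldDeviation β h (update s i b)|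
      ≤ (1 + β) / n * |spin (s i) - spin b| := by
  set s' := update s i b
  set d := spin (s i) - spin b
  have hm : magnetization s - magnetization s' = 1 / n * d := by
    rw [magnetization, magnetization, ← mul_sub, ← sum_sub_distrib, sum_spin_sub_spin_update,
      if_pos (mem_univ i)]
  have hlm : ∀ j, |localMagnetization s j - localMagnetization s' j| ≤ 1 / n * |d| := fun j => by
    rw [localMagnetization, localMagnetization, ← mul_sub, ← sum_sub_distrib,
      sum_spin_sub_spin_update, abs_mul, abs_of_nonneg (by positivity)]
    refine mul_le_mul_of_nonneg_left ?_ (by positivity)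
    split_ifs <;> simp [d]
  have htanh : ∀ j, |tanh (β * localMagnetization s j + β * h)
      - tanh (β * localMagnetization s' j + β * h)| ≤ β * (1 / n * |d|) := fun j =>
    calc _ ≤ |β * (localMagnetization s j - localMagnetization s' j)| := by
          convert abs_tanh_sub_tanh_le _ _ using 2; ring
      _ ≤ β * (1 / n * |d|) := by rw [abs_mul, abs_of_nonneg hβ]; gcongr; exact hlm j
  have hinv : (n : ℝ)⁻¹ * n * (n : ℝ)⁻¹ = (n : ℝ)⁻¹ := by
    simpa using mul_inv_mul_cancel (n : ℝ)⁻¹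
  calc |meanFieldDeviation β h s - meanFieldDeviation β h s'|
      = |(magnetization s - magnetization s') - 1 / n * ∑ j, (tanh (β * localMagnetization s j
          + β * h) - tanh (β * localMagnetization s' j + β * h))| := by
        rw [meanFieldDeviation, meanFieldDeviation, sum_sub_distrib]; congr 1; ring
    _ ≤ |magnetization s - magnetization s'| + 1 / n * ∑ j, |tanh (β * localMagnetization s j
          + β * h) - tanh (β * localMagnetization s' j + β * h)| := by
        refine (abs_sub _ _).trans ?_
        rw [abs_mul, abs_of_nonneg (by positivity : (0 : ℝ) ≤ 1 / n)]
        gcongr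
        exact abs_sum_le_sum_abs _ _
    _ ≤ 1 / n * |d| + 1 / n * ∑ _j : Fin n, β * (1 / n * |d|) := by
        rw [hm, abs_mul, abs_of_nonneg (by positivity)]
        gcongr with j
        exact htanh j
    _ = (1 + β) / n * |d| := by
        simp only [sum_const, card_univ, Fintype.card_fin, nsmul_eq_mul]
        linear_combination β * |d| * hinv

theorem abs_sum_mul_meanFieldDeviation_mul_exp_le (hn : n ≠ 0) (hβ : 0 ≤ β) (l : ℝ) :
    |∑ s : Fin n → Bool,
        exp (hamiltonian β h s) * (meanFieldDeviation β h s * exp (l * meanFieldDeviation β h s))|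
      ≤ 2 * (1 + β) / n * |l|
        * ∑ s : Fin n → Bool, exp (hamiltonian β h s) * exp (l * meanFieldDeviation β h s) := by
  set w := fun s : Fin n → Bool => exp (hamiltonian β h s)
  set f := meanFieldDeviation β h
  have hw : ∀ s, 0 < w s := fun s => exp_pos _
  have hnR : (0 : ℝ) < n := by positivity
  -- the exchangeable pair: Glauber transitions `(s, i, b)` weighted by `w s * heatBath w s i b`
  have key := abs_sum_mul_exp_le_of_antisymm glauberSwap
    (μ := fun x => w x.1 * heatBath w x.1 x.2.1 x.2.2) (F := fun x => spin (x.1 x.2.1) - spin x.2.2)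
    (g := fun x => f x.1) (C := 4 * (1 + β) / n)
    (fun x => mul_nonneg (hw _).le (div_nonneg (hw _).le (add_pos (hw _) (hw _)).le))
    (fun ⟨s, i, b⟩ => heatBath_detailed_balance w s i b)
    (fun ⟨s, i, b⟩ => by simp)
    (fun ⟨s, i, b⟩ => by
      have hF := abs_spin_sub_spin_le (s i) b
      calc |(spin (s i) - spin b) * (f s - f (update s i b))|
          ≤ |spin (s i) - spin b| * ((1 + β) / n * |spin (s i) - spin b|) := by
            rw [abs_mul]; gcongr; exact abs_meanFieldDeviation_sub_update_le h hβ s i b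
        _ ≤ 2 * ((1 + β) / n * 2) := by gcongr
        _ = 4 * (1 + β) / n := by ring)
    l
  rw [sum_heatBath_mul_spin_sub_mul_fst w hw fun s => exp (l * f s),
    sum_heatBath_mul_fst w hw fun s => exp (l * f s)] at key
  simp only [Fintype.card_fin, w, sum_spin_sub_heatBath h hn] at key
  have hlhs : ∑ s, w s * exp (l * f s) * (n * f s) = n * ∑ s, w s * (f s * exp (l * f s)) := by
    rw [mul_sum]; exact sum_congr rfl fun s _ => by ring
  rw [hlhs, abs_mul, abs_of_pos hnR] at key
  refine le_of_mul_le_mul_left (key.trans_eq ?_) hnR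
  ring

end CurieWeiss

open SpinSystem CurieWeiss

/-- **Intermediate concentration step in the Curie–Weiss model.**
Configurations are encoded by `s : Fin n → Bool` with spins `σ s i = ±1`, Gibbs
weight `w s = exp((β/n) ∑_{i<j} σ_i σ_j + β h ∑_i σ_i)`, magnetization
`m s = (1/n) ∑ i, σ s i`, and `mᵢ s = (1/n) ∑_{j ≠ i} σ s j`. Then for all `t ≥ 0`,
`P(|m - (1/n) ∑ i, tanh(β mᵢ + β h)| ≥ t/√n) ≤ 2 exp(-t²/(4(1+β)))`, where the
probability of an event is the Gibbs-weight of the event divided by the total weight. -/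
theorem curie_weiss_local_field_concentration
    (n : ℕ) (hn : 1 ≤ n) (β h : ℝ) (hβ : 0 ≤ β)
    (σ : (Fin n → Bool) → Fin n → ℝ)
    (hσ : ∀ s i, σ s i = if s i then 1 else -1)
    (w : (Fin n → Bool) → ℝ)
    (hw : ∀ s, w s = Real.exp (β / n *
        (∑ p ∈ Finset.univ.filter (fun p : Fin n × Fin n => p.1 < p.2), σ s p.1 * σ s p.2)
      + β * h * ∑ i, σ s i))
    (m : (Fin n → Bool) → ℝ) (hm : ∀ s, m s = (1 / n) * ∑ i, σ s i)
    (mi : (Fin n → Bool) → Fin n → ℝ)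
    (hmi : ∀ s i, mi s i = (1 / n) * ∑ j ∈ Finset.univ.filter (fun j => j ≠ i), σ s j)
    (t : ℝ) (ht : 0 ≤ t) :
    (∑ s ∈ Finset.univ.filter
        (fun s : Fin n → Bool =>
          t / Real.sqrt n ≤ |m s - (1 / n) * ∑ i, Real.tanh (β * mi s i + β * h)|), w s)
      / (∑ s : Fin n → Bool, w s)
      ≤ 2 * Real.exp (-t ^ 2 / (4 * (1 + β))) := by
  obtain rfl : σ = fun s i => spin (s i) := funext fun s => funext (hσ s)
  obtain rfl : w = fun s => exp (hamiltonian β h s) := funext hw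
  obtain rfl : m = magnetization := funext hm
  obtain rfl : mi = localMagnetization := funext fun s => funext (hmi s)
  have hn0 : n ≠ 0 := Nat.one_le_iff_ne_zero.1 hn
  have hnR : (0 : ℝ) < n := by positivity
  have htail := sum_filter_le_abs_le_two_mul_exp (fun s => (exp_pos _).le)
    (by positivity : (0 : ℝ) < 2 * (1 + β) / n) (div_nonneg ht (sqrt_nonneg n))
    (sum_mul_exp_mul_le_of_abs_deriv_le (abs_sum_mul_meanFieldDeviation_mul_exp_le h hn0 hβ))
  have hexp : -(t / √n) ^ 2 / (2 * (2 * (1 + β) / n)) = -t ^ 2 / (4 * (1 + β)) := by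
    rw [div_pow, sq_sqrt hnR.le]
    field_simp
    ring
  rw [hexp] at htail
  rw [div_le_iff₀ (sum_pos (fun s _ => exp_pos _) univ_nonempty)]
  exact htail
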